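/- arXiv:math/9404213 — 6 statements merged into one kernel-verified Lean document; each statement's English description precedes it below -/
import Mathlib

section
/- Let X be a Banach space, Y a closed subspace of X** with δ(Y,X) > 0 (where X is identified with its canonical image in X**), and T: Y → X a bounded linear isomorphism onto a closed subspace of X. Then H = {y - Ty : y ∈ Y} is a closed subspace of X** isomorphic to Y, and δ(H, X) > 0. -/
/-!
Write `S y = y - J (T y)`. Since `J (T y)` lies in `J X`, the inclination `δ = δ(Y, X)` gives
`δ ‖y‖ ≤ ‖S y‖`, so `S` is bounded below, hence an isomorphism of the Banach space `Y` onto its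
(therefore closed) range `H`. For `h = S y` of norm one and `v ∈ X`, `h - J v = y - J (T y + v)`
again, so `‖h - J v‖ ≥ δ ‖y‖ ≥ δ / ‖S‖`, which bounds `δ(H, X)` from below.
-/

open NormedSpace

section Inclination

variable {E F : Type*} [SeminormedAddCommGroup E]

/-- The inclination `δ(U, range L)`. -/
noncomputable def inclination (U : Set E) (L : F → E) : ℝ :=
  sInf {r : ℝ | ∃ u ∈ U, ∃ v : F, ‖u‖ = 1 ∧ r = ‖u - L v‖}

lemma exists_norm_eq_one_of_inclination_pos {U : Set E} {L : F → E} (h : 0 < inclination U L) :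
    ∃ u ∈ U, ‖u‖ = 1 := by
  by_contra! hU
  have hempty : {r : ℝ | ∃ u ∈ U, ∃ v : F, ‖u‖ = 1 ∧ r = ‖u - L v‖} = ∅ :=
    Set.eq_empty_of_forall_notMem fun _ ⟨u, hu, _, hu1, _⟩ => hU u hu hu1
  simp only [inclination, hempty, Real.sInf_empty, lt_irrefl] at h

lemma le_inclination [Nonempty F] {U : Set E} {L : F → E} {c : ℝ} (hU : ∃ u ∈ U, ‖u‖ = 1)
    (h : ∀ u ∈ U, ∀ v, ‖u‖ = 1 → c ≤ ‖u - L v‖) : c ≤ inclination U L := by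
  obtain ⟨u, hu, hu1⟩ := hU
  refine le_csInf ⟨_, u, hu, Classical.arbitrary F, hu1, rfl⟩ ?_
  rintro _ ⟨u, hu, v, hu1, rfl⟩
  exact h u hu v hu1

lemma inclination_mul_norm_le [NormedSpace ℝ E] [AddCommGroup F] [Module ℝ F]
    (U : Submodule ℝ E) (L : F →ₗ[ℝ] E) {u : E} (hu : u ∈ U) (v : F) :
    inclination U L * ‖u‖ ≤ ‖u - L v‖ := by
  rcases (norm_nonneg u).eq_or_lt' with hu0 | hu0
  · simp [hu0]
  have hle : inclination U L ≤ ‖(‖u‖⁻¹ : ℝ) • u - L ((‖u‖⁻¹ : ℝ) • v)‖ :=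
    csInf_le ⟨0, by rintro r ⟨-, -, -, -, rfl⟩; positivity⟩
      ⟨_, U.smul_mem _ hu, _, by rw [norm_smul, norm_inv, norm_norm, inv_mul_cancel₀ hu0.ne'], rfl⟩
  rw [map_smul, ← smul_sub, norm_smul, norm_inv, norm_norm] at hle
  rwa [le_inv_mul_iff₀ hu0, mul_comm] at hle

end Inclination

section GraphMap

variable {E F : Type*} [NormedAddCommGroup E] [NormedSpace ℝ E]
  [SeminormedAddCommGroup F] [NormedSpace ℝ F] (U : Submodule ℝ E) (L : F →L[ℝ] E) (T : U →L[ℝ] F)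

lemma inclination_mul_norm_le_norm_sub_comp (y : U) :
    inclination U L * ‖(y : E)‖ ≤ ‖(y : E) - L (T y)‖ :=
  inclination_mul_norm_le U L.toLinearMap y.2 (T y)

lemma norm_sub_comp_le_opNorm_mul (y : U) :
    ‖(y : E) - L (T y)‖ ≤ ‖U.subtypeL - L.comp T‖ * ‖(y : E)‖ :=
  (U.subtypeL - L.comp T).le_opNorm y

lemma isClosed_range_sub_comp [CompleteSpace U] (h : 0 < inclination U L) :
    IsClosed (Set.range fun y : U => (y : E) - L (T y)) := by
  refine (ContinuousLinearMap.antilipschitz_of_bound (U.subtypeL - L.comp T)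
    (K := (⟨_, (inv_pos.2 h).le⟩ : NNReal)) fun y => ?_).isClosed_range
    (ContinuousLinearMap.uniformContinuous _)
  change _ ≤ (inclination U L)⁻¹ * _
  rw [le_inv_mul_iff₀ h]
  exact inclination_mul_norm_le_norm_sub_comp U L T y

lemma inclination_range_sub_comp_pos (h : 0 < inclination U L) :
    0 < inclination (Set.range fun y : U => (y : E) - L (T y)) L := by
  set S := U.subtypeL - L.comp T
  obtain ⟨u, hu, hu1⟩ := exists_norm_eq_one_of_inclination_pos h
  have hSu : 0 < ‖S ⟨u, hu⟩‖ :=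
    (inclination_mul_norm_le_norm_sub_comp U L T ⟨u, hu⟩).trans_lt' (by rwa [hu1, mul_one])
  have hS : 0 < ‖S‖ := by
    have := norm_sub_comp_le_opNorm_mul U L T ⟨u, hu⟩
    rw [hu1, mul_one] at this
    exact hSu.trans_le this
  have hunit : ‖(‖S ⟨u, hu⟩‖⁻¹ : ℝ) • S ⟨u, hu⟩‖ = 1 := by
    rw [norm_smul, norm_inv, norm_norm, inv_mul_cancel₀ hSu.ne']
  refine (div_pos h hS).trans_le <|
    le_inclination ⟨_, ⟨(‖S ⟨u, hu⟩‖⁻¹ : ℝ) • ⟨u, hu⟩, map_smul S _ _⟩, hunit⟩ ?_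
  rintro _ ⟨y, rfl⟩ v hy1
  have hSy : 1 ≤ ‖S‖ * ‖(y : E)‖ := hy1 ▸ norm_sub_comp_le_opNorm_mul U L T y
  have hsub : (y : E) - L (T y) - L v = y - L (T y + v) := by rw [map_add, sub_sub]
  calc inclination U L / ‖S‖ ≤ inclination U L * ‖(y : E)‖ := by
        rw [div_le_iff₀ hS]
        nlinarith
    _ ≤ ‖(y : E) - L (T y) - L v‖ :=
        hsub ▸ inclination_mul_norm_le U L.toLinearMap y.2 (T y + v)

end GraphMap

theorem graph_subspace_closed_isomorphic_and_inclined_general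
    {X : Type*} [NormedAddCommGroup X] [NormedSpace ℝ X]
    (Y : Submodule ℝ (StrongDual ℝ (StrongDual ℝ X)))
    (hYc : IsClosed (Y : Set (StrongDual ℝ (StrongDual ℝ X))))
    (hYX : 0 < sInf {r : ℝ | ∃ u ∈ Y, ∃ v : X, ‖u‖ = 1 ∧
        r = ‖u - NormedSpace.inclusionInDoubleDual ℝ X v‖})
    (T : Y →L[ℝ] X) :
    IsClosed (Set.range fun y : Y =>
        (y : StrongDual ℝ (StrongDual ℝ X)) -
          NormedSpace.inclusionInDoubleDual ℝ X (T y)) ∧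
      (∃ c C : ℝ, 0 < c ∧ ∀ y : Y,
        c * ‖(y : StrongDual ℝ (StrongDual ℝ X))‖ ≤ ‖(y : StrongDual ℝ (StrongDual ℝ X)) -
            NormedSpace.inclusionInDoubleDual ℝ X (T y)‖ ∧
        ‖(y : StrongDual ℝ (StrongDual ℝ X)) -
            NormedSpace.inclusionInDoubleDual ℝ X (T y)‖ ≤ C * ‖(y : StrongDual ℝ (StrongDual ℝ X))‖) ∧
      0 < sInf {r : ℝ | ∃ h ∈ (Set.range fun y : Y =>
            (y : StrongDual ℝ (StrongDual ℝ X)) -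
              NormedSpace.inclusionInDoubleDual ℝ X (T y)), ∃ v : X, ‖h‖ = 1 ∧
          r = ‖h - NormedSpace.inclusionInDoubleDual ℝ X v‖} := by
  set J := inclusionInDoubleDual ℝ X
  have hδ : 0 < inclination (Y : Set (StrongDual ℝ (StrongDual ℝ X))) J := hYX
  have : CompleteSpace Y := hYc.completeSpace_coe
  -- `E` has to be given: unification cannot read it off `Y`, whose module structure is found
  -- along another instance path.
  have hclosed := isClosed_range_sub_comp (E := StrongDual ℝ (StrongDual ℝ X)) Y J T hδ
  have hlower := inclination_mul_norm_le_norm_sub_comp (E := StrongDual ℝ (StrongDual ℝ X)) Y J T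
  have hupper := norm_sub_comp_le_opNorm_mul (E := StrongDual ℝ (StrongDual ℝ X)) Y J T
  have hinclined := inclination_range_sub_comp_pos (E := StrongDual ℝ (StrongDual ℝ X)) Y J T hδ
  exact ⟨hclosed, ⟨_, _, hδ, fun y => ⟨hlower y, hupper y⟩⟩, hinclined⟩

/-- Let `Y` be a closed subspace of `X**` with inclination `δ(Y, X) > 0`
and let `T : Y → X` be a bounded isomorphism onto a closed subspace of `X`. Then
`H = {y - Ty : y ∈ Y}` is a closed subspace of `X**` isomorphic to `Y`, and
`δ(H, X) > 0`. -/
theorem graph_subspace_closed_isomorphic_and_inclined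
    {X : Type*} [NormedAddCommGroup X] [NormedSpace ℝ X] [CompleteSpace X]
    (Y : Submodule ℝ (StrongDual ℝ (StrongDual ℝ X)))
    (hYc : IsClosed (Y : Set (StrongDual ℝ (StrongDual ℝ X))))
    (hYX : 0 < sInf {r : ℝ | ∃ u ∈ Y, ∃ v : X, ‖u‖ = 1 ∧
        r = ‖u - NormedSpace.inclusionInDoubleDual ℝ X v‖})
    (T : Y →L[ℝ] X)
    (hTinj : Function.Injective T)
    (hTbelow : ∃ m : ℝ, 0 < m ∧ ∀ y : Y, m * ‖(y : StrongDual ℝ (StrongDual ℝ X))‖ ≤ ‖T y‖)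
    (hTrange : IsClosed (Set.range T)) :
    IsClosed (Set.range fun y : Y =>
        (y : StrongDual ℝ (StrongDual ℝ X)) -
          NormedSpace.inclusionInDoubleDual ℝ X (T y)) ∧
      (∃ c C : ℝ, 0 < c ∧ ∀ y : Y,
        c * ‖(y : StrongDual ℝ (StrongDual ℝ X))‖ ≤ ‖(y : StrongDual ℝ (StrongDual ℝ X)) -
            NormedSpace.inclusionInDoubleDual ℝ X (T y)‖ ∧
        ‖(y : StrongDual ℝ (StrongDual ℝ X)) -
            NormedSpace.inclusionInDoubleDual ℝ X (T y)‖ ≤ C * ‖(y : StrongDual ℝ (StrongDual ℝ X))‖) ∧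
      0 < sInf {r : ℝ | ∃ h ∈ (Set.range fun y : Y =>
            (y : StrongDual ℝ (StrongDual ℝ X)) -
              NormedSpace.inclusionInDoubleDual ℝ X (T y)), ∃ v : X, ‖h‖ = 1 ∧
          r = ‖h - NormedSpace.inclusionInDoubleDual ℝ X v‖} :=
  graph_subspace_closed_isomorphic_and_inclined_general Y hYc hYX T
end

section
/- Fix 1 < p < 2 and let X_n be the span of the first n unit vectors in l_p (X_0 = {0}). In the space K(X_n) of sequences (x_i), x_i ∈ X_i, with finite K-norm ||(x_i)||_K = sup_n ||(x_0,...,x_n,0,0,...)||_J, define f_i = (0,...,0, e_i^i, e_i^{i+1}, ...) where e_i^n denotes the i-th unit vector viewed in X_n for n ≥ i. Then for all finitely supported scalars (a_i): (sum_i |a_i|^p)^{1/p} ≤ ||sum_i a_i f_i||_K ≤ 2^{1/2} (sum_i |a_i|^p)^{1/p}. In particular (f_i) is equivalent to the unit vector basis of l_p. -/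
open Finset

/-- Square of the Bellenot `J`-norm. -/
noncomputable def jnormSq {E : Type*} [SeminormedAddCommGroup E] (x : ℕ → E) : ℝ :=
  sSup {r : ℝ | ∃ (k : ℕ) (P : ℕ → ℕ), 0 < k ∧ StrictMono P ∧
    r = (∑ i ∈ range (k - 1), ‖x (P i) - x (P (i + 1))‖ ^ 2) + ‖x (P (k - 1))‖ ^ 2}

/-- The Bellenot `J`-norm. -/
noncomputable def jnorm {E : Type*} [SeminormedAddCommGroup E] (x : ℕ → E) : ℝ :=
  Real.sqrt (jnormSq x / 2)

/-- The `K`-norm: `‖(x i)‖_K = sup_n ‖(x 0, …, x n, 0, 0, …)‖_J`. -/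
noncomputable def knorm {E : Type*} [SeminormedAddCommGroup E] (x : ℕ → E) : ℝ :=
  ⨆ n : ℕ, jnorm (fun k => if k ≤ n then x k else 0)

/-!
The partial sums `x n = ∑_{i ∈ s, i ≤ n} a i eᵢ` satisfy `‖x b - x a‖² ≤ ‖x b‖² - ‖x a‖²` for
`a ≤ b`: the `p`-th powers of the norms add up over disjoint supports, and `t ↦ t ^ (2 / p)` is
superadditive because `p ≤ 2`. For such a sequence each `J`-sum of the truncation at `n`
telescopes against the potential `‖x a‖²` (frozen at `2 ‖x n‖²` past `n`), so it is at most
`2 ‖x n‖²`; and since `x 0 = 0`, the two-point chain `0 < n` attains `2 ‖x n‖²`. Hence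
`‖x‖_K = sup_n ‖x n‖ = (∑ |a i| ^ p) ^ (1 / p)`.
-/

section JNorm

variable {E : Type*} [SeminormedAddCommGroup E]

def jsums (x : ℕ → E) : Set ℝ :=
  {r : ℝ | ∃ (k : ℕ) (P : ℕ → ℕ), 0 < k ∧ StrictMono P ∧
    r = (∑ i ∈ range (k - 1), ‖x (P i) - x (P (i + 1))‖ ^ 2) + ‖x (P (k - 1))‖ ^ 2}

theorem jnormSq_eq_sSup_jsums (x : ℕ → E) : jnormSq x = sSup (jsums x) := rfl

theorem mem_upperBounds_jsums_of_potential {x : ℕ → E} {φ : ℕ → ℝ} {C : ℝ}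
    (hφ : ∀ a, 0 ≤ φ a) (hdist : ∀ a b, a < b → ‖x a - x b‖ ^ 2 ≤ φ b - φ a)
    (hC : ∀ a, φ a + ‖x a‖ ^ 2 ≤ C) : C ∈ upperBounds (jsums x) := by
  rintro r ⟨k, P, -, hP, rfl⟩
  have htele : ∑ i ∈ range (k - 1), ‖x (P i) - x (P (i + 1))‖ ^ 2 ≤ φ (P (k - 1)) - φ (P 0) :=
    calc _ ≤ ∑ i ∈ range (k - 1), (φ (P (i + 1)) - φ (P i)) :=
          sum_le_sum fun i _ => hdist _ _ (hP i.lt_succ_self)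
      _ = _ := sum_range_sub (φ ∘ P) _
  linarith [hφ (P 0), hC (P (k - 1))]

theorem dist_sq_add_norm_sq_mem_jsums (x : ℕ → E) {a b : ℕ} (hab : a < b) :
    ‖x a - x b‖ ^ 2 + ‖x b‖ ^ 2 ∈ jsums x := by
  refine ⟨2, fun i => a + i * (b - a), two_pos, fun i j hij => ?_, ?_⟩
  · exact Nat.add_lt_add_left (Nat.mul_lt_mul_of_pos_right hij (Nat.sub_pos_of_lt hab)) a
  · simp [Nat.add_sub_cancel' hab.le]

end JNorm

section Truncation

variable {E : Type*} [SeminormedAddCommGroup E] {x : ℕ → E}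

theorem norm_sq_mono_of_norm_sub_sq_le
    (hx : ∀ a b, a ≤ b → ‖x b - x a‖ ^ 2 ≤ ‖x b‖ ^ 2 - ‖x a‖ ^ 2) {a b : ℕ} (hab : a ≤ b) :
    ‖x a‖ ^ 2 ≤ ‖x b‖ ^ 2 := by
  linarith [hx a b hab, sq_nonneg ‖x b - x a‖]

theorem jnormSq_truncation_le_of_norm_sub_sq_le
    (hx : ∀ a b, a ≤ b → ‖x b - x a‖ ^ 2 ≤ ‖x b‖ ^ 2 - ‖x a‖ ^ 2) (n : ℕ) :
    2 * ‖x n‖ ^ 2 ∈ upperBounds (jsums fun k => if k ≤ n then x k else 0) := by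
  refine mem_upperBounds_jsums_of_potential
    (φ := fun a => if a ≤ n then ‖x a‖ ^ 2 else 2 * ‖x n‖ ^ 2) (fun a => by split_ifs <;> positivity) (fun a b hab => ?_) (fun a => ?_)
  · by_cases hb : b ≤ n
    · simp only [hb, hab.le.trans hb, if_true, norm_sub_rev (x a)]
      exact hx a b hab.le
    by_cases ha : a ≤ n
    · simp only [ha, hb, if_true, if_false, sub_zero]
      linarith [norm_sq_mono_of_norm_sub_sq_le hx ha]
    · simp [ha, hb]
  · by_cases ha : a ≤ n
    · simp only [ha, if_true]
      linarith [norm_sq_mono_of_norm_sub_sq_le hx ha]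
    · simp [ha]

theorem jnorm_truncation_le_of_norm_sub_sq_le
    (hx : ∀ a b, a ≤ b → ‖x b - x a‖ ^ 2 ≤ ‖x b‖ ^ 2 - ‖x a‖ ^ 2) (n : ℕ) :
    jnorm (fun k => if k ≤ n then x k else 0) ≤ ‖x n‖ := by
  have h := Real.sSup_le (jnormSq_truncation_le_of_norm_sub_sq_le hx n) (by positivity)
  rw [jnorm, ← Real.sqrt_sq (norm_nonneg (x n))]
  exact Real.sqrt_le_sqrt (by rw [← jnormSq_eq_sSup_jsums] at h; linarith)

theorem norm_le_jnorm_truncation_of_norm_sub_sq_le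
    (hx : ∀ a b, a ≤ b → ‖x b - x a‖ ^ 2 ≤ ‖x b‖ ^ 2 - ‖x a‖ ^ 2) (hx0 : x 0 = 0) (n : ℕ) :
    ‖x n‖ ≤ jnorm (fun k => if k ≤ n then x k else 0) := by
  rcases n.eq_zero_or_pos with rfl | hn
  · simp only [hx0, norm_zero]
    exact Real.sqrt_nonneg _
  have hmem := dist_sq_add_norm_sq_mem_jsums (fun k => if k ≤ n then x k else 0) hn
  simp only [zero_le, le_refl, if_true, hx0, zero_sub, norm_neg] at hmem
  have h := le_csSup ⟨_, jnormSq_truncation_le_of_norm_sub_sq_le hx n⟩ hmem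
  rw [jnorm, ← Real.sqrt_sq (norm_nonneg (x n))]
  exact Real.sqrt_le_sqrt (by rw [← jnormSq_eq_sSup_jsums] at h; linarith)

theorem knorm_le_of_norm_sub_sq_le
    (hx : ∀ a b, a ≤ b → ‖x b - x a‖ ^ 2 ≤ ‖x b‖ ^ 2 - ‖x a‖ ^ 2) {A : ℝ} (hA : ∀ n, ‖x n‖ ≤ A) :
    knorm x ≤ A :=
  ciSup_le fun n => (jnorm_truncation_le_of_norm_sub_sq_le hx n).trans (hA n)

theorem norm_le_knorm_of_norm_sub_sq_le
    (hx : ∀ a b, a ≤ b → ‖x b - x a‖ ^ 2 ≤ ‖x b‖ ^ 2 - ‖x a‖ ^ 2) (hx0 : x 0 = 0) {A : ℝ}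
    (hA : ∀ n, ‖x n‖ ≤ A) (n : ℕ) : ‖x n‖ ≤ knorm x := by
  refine (norm_le_jnorm_truncation_of_norm_sub_sq_le hx hx0 n).trans <|
    le_ciSup (f := fun m => jnorm fun k => if k ≤ m then x k else 0) ⟨A, ?_⟩ n
  rintro _ ⟨m, rfl⟩
  exact (jnorm_truncation_le_of_norm_sub_sq_le hx m).trans (hA m)

end Truncation

theorem sq_add_sq_le_sq_of_rpow_add_rpow_eq {p α β γ : ℝ} (hp : 0 < p) (hp2 : p ≤ 2)
    (hα : 0 ≤ α) (hβ : 0 ≤ β) (hγ : 0 ≤ γ) (h : α ^ p + β ^ p = γ ^ p) :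
    α ^ 2 + β ^ 2 ≤ γ ^ 2 := by
  have hsq : ∀ t : ℝ, 0 ≤ t → (t ^ p) ^ (2 / p) = t ^ 2 := fun t ht => by
    rw [← Real.rpow_mul ht, mul_div_cancel₀ _ hp.ne', Real.rpow_two]
  rw [← hsq α hα, ← hsq β hβ, ← hsq γ hγ, ← h]
  exact Real.add_rpow_le_rpow_add (by positivity) (by positivity) ((one_le_div hp).2 hp2)

theorem lp.norm_sub_sq_le_of_subset {ι : Type*} [DecidableEq ι] {E : ι → Type*}
    [∀ i, NormedAddCommGroup (E i)] {p : ENNReal} [Fact (1 ≤ p)] (hp : 0 < p.toReal)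
    (hp2 : p.toReal ≤ 2) (c : ∀ i, E i) {t t' : Finset ι} (htt' : t ⊆ t') :
    ‖∑ i ∈ t', lp.single p i (c i) - ∑ i ∈ t, lp.single p i (c i)‖ ^ 2 ≤
      ‖∑ i ∈ t', lp.single p i (c i)‖ ^ 2 - ‖∑ i ∈ t, lp.single p i (c i)‖ ^ 2 := by
  rw [← sum_sdiff htt', add_sub_cancel_right, le_sub_iff_add_le, add_comm]
  refine sq_add_sq_le_sq_of_rpow_add_rpow_eq hp hp2 (norm_nonneg _) (norm_nonneg _)
    (norm_nonneg _) ?_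
  rw [sum_sdiff htt', lp.norm_sum_single hp, lp.norm_sum_single hp, lp.norm_sum_single hp,
    ← sum_sdiff htt', add_comm]

theorem lp.norm_sum_single_le_of_subset {ι : Type*} [DecidableEq ι] {E : ι → Type*}
    [∀ i, NormedAddCommGroup (E i)] {p : ENNReal} [Fact (1 ≤ p)] (hp : 0 < p.toReal)
    (c : ∀ i, E i) {t t' : Finset ι} (htt' : t ⊆ t') :
    ‖∑ i ∈ t, lp.single p i (c i)‖ ≤ ‖∑ i ∈ t', lp.single p i (c i)‖ := by
  rw [← Real.rpow_le_rpow_iff (norm_nonneg _) (norm_nonneg _) hp, lp.norm_sum_single hp,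
    lp.norm_sum_single hp]
  exact sum_le_sum_of_subset_of_nonneg htt' fun i _ _ => by positivity

theorem knorm_lp_partialSums_eq_norm_sum {E : ℕ → Type*} [∀ i, NormedAddCommGroup (E i)]
    {p : ENNReal} [Fact (1 ≤ p)] (hp : 0 < p.toReal) (hp2 : p.toReal ≤ 2) (c : ∀ i, E i) {s : Finset ℕ} (hs : ∀ i ∈ s, 1 ≤ i) :
    knorm (fun n => ∑ i ∈ s with i ≤ n, lp.single p i (c i)) =
      ‖∑ i ∈ s, lp.single p i (c i)‖ := by
  set x : ℕ → lp E p := fun n => ∑ i ∈ s with i ≤ n, lp.single p i (c i)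
  have hpyth : ∀ m m', m ≤ m' → ‖x m' - x m‖ ^ 2 ≤ ‖x m'‖ ^ 2 - ‖x m‖ ^ 2 := fun m m' h =>
    lp.norm_sub_sq_le_of_subset hp hp2 c (monotone_filter_right s fun _ _ hi => hi.trans h)
  have hbound : ∀ n, ‖x n‖ ≤ ‖∑ i ∈ s, lp.single p i (c i)‖ := fun n =>
    lp.norm_sum_single_le_of_subset hp c (filter_subset _ s)
  have hzero : x 0 = 0 := by
    simp only [x, filter_false_of_mem fun i hi => Nat.not_le.mpr (hs i hi), sum_empty]
  have hfull : x (s.sup id) = ∑ i ∈ s, lp.single p i (c i) := by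
    simp only [x, filter_true_of_mem (p := (· ≤ s.sup id)) fun _ hi => le_sup (f := id) hi]
  refine le_antisymm (knorm_le_of_norm_sub_sq_le hpyth hbound) ?_
  exact hfull ▸ norm_le_knorm_of_norm_sub_sq_le hpyth hzero hbound (s.sup id)

/-- For `1 < p < 2`, `X n` the span of the first `n` unit vectors of `ℓ_p`,
and `f i = (0, …, 0, e i, e i, …)` (the `i`-th unit vector appearing from position `i`
on) in `K(X n)`, one has for all finitely supported scalars `(a i)`:
`(∑ |a i|^p)^{1/p} ≤ ‖∑ a i • f i‖_K ≤ 2^{1/2} (∑ |a i|^p)^{1/p}`. -/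
theorem bellenot_f_sequence_equivalent_lp_basis
    (p : ℝ) (hp : 1 < p) (hp2 : p < 2) [Fact (1 ≤ ENNReal.ofReal p)]
    (a : ℕ → ℝ) (s : Finset ℕ) (hs : ∀ i ∈ s, 1 ≤ i) :
    letI e : ℕ → lp (fun _ : ℕ => ℝ) (ENNReal.ofReal p) :=
      fun i => lp.single (ENNReal.ofReal p) i (1 : ℝ)
    letI F : ℕ → lp (fun _ : ℕ => ℝ) (ENNReal.ofReal p) :=
      fun n => ∑ i ∈ s, if i ≤ n then a i • e i else 0
    (∑ i ∈ s, |a i| ^ p) ^ (1 / p) ≤ knorm F ∧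
      knorm F ≤ Real.sqrt 2 * (∑ i ∈ s, |a i| ^ p) ^ (1 / p) := by
  have hp0 : 0 < p := by linarith
  have hpr : (ENNReal.ofReal p).toReal = p := ENNReal.toReal_ofReal hp0.le
  have hnorm :
      ‖∑ i ∈ s, lp.single (ENNReal.ofReal p) i (a i)‖ = (∑ i ∈ s, |a i| ^ p) ^ (1 / p) := by
    have h := lp.norm_sum_single (by rwa [hpr]) a s
    simp only [hpr, Real.norm_eq_abs] at h
    rw [← h, one_div, Real.rpow_rpow_inv (norm_nonneg _) hp0.ne']
  simp only [← lp.single_smul, smul_eq_mul, mul_one, ← sum_filter]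
  rw [knorm_lp_partialSums_eq_norm_sum (by rwa [hpr]) (by rw [hpr]; exact hp2.le) a hs, hnorm]
  exact ⟨le_rfl, le_mul_of_one_le_left (by positivity) (Real.one_le_sqrt.2 one_le_two)⟩
end

section
/- Let X be a subspace of a Banach space Z and let M ⊆ X* be a closed subspace that is boundedly extendable onto Z, i.e., there exists an isomorphic embedding π: M → Z* with (π(f))(x) = f(x) for all f ∈ M, x ∈ X. Suppose M is quasibasic in X* with witnessing finite-rank operators u_n(x) = sum_{i=1}^{p(n)} x*_{i,n}(x) x_{i,n}, x*_{i,n} ∈ M, x_{i,n} ∈ X, u_n(x) → x. Then X^⊥ = {z* ∈ Z* : z*|_X = 0} is a complemented subspace of Z*. -/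
/-! The operators `α_n = π ∘ u_n* ∘ r` on `Z*` are uniformly bounded, since Banach–Steinhaus bounds
`‖u_n‖`; they act on `X` as `z ↦ z ∘ u_n → z` and vanish on `X^⊥`. A weak-* cluster point `P` of
them along an ultrafilter is therefore the identity on `X` and kills `X^⊥`, so `id - P` is a
bounded projection onto `X^⊥`. -/

open Filter Topology

section

variable {𝕜 E : Type*} [NontriviallyNormedField 𝕜] [SeminormedAddCommGroup E] [NormedSpace 𝕜 E]

/-- The limit is found in the product over `e` of the weak-* compact balls of radius `C * ‖e‖`
(Banach–Alaoglu and Tychonoff). -/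
theorem exists_tendsto_apply_apply_of_norm_le {F ι : Type*} [ProperSpace 𝕜]
    [SeminormedAddCommGroup F] [NormedSpace 𝕜 F] (U : Ultrafilter ι)
    (T : ι → E →L[𝕜] StrongDual 𝕜 F) {C : ℝ} (hT : ∀ i e, ‖T i e‖ ≤ C * ‖e‖) :
    ∃ P : E →L[𝕜] StrongDual 𝕜 F, ∀ e w, Tendsto (fun i => T i e w) U (𝓝 (P e w)) := by
  let g : ι → E →ₗ[𝕜] WeakDual 𝕜 F := fun i =>
    StrongDual.toWeakDual.toLinearMap ∘ₗ (T i).toLinearMap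
  have hK : IsCompact (Set.univ.pi fun e : E =>
      WeakDual.toStrongDual ⁻¹' Metric.closedBall (0 : StrongDual 𝕜 F) (C * ‖e‖)) :=
    isCompact_univ_pi fun _ => WeakDual.isCompact_closedBall _ _
  obtain ⟨f, hfK, hf⟩ := hK.ultrafilter_le_nhds (U.map fun i e => g i e) <| by
    rw [Ultrafilter.coe_map, le_principal_iff, mem_map]
    refine univ_mem' fun i e _ => ?_
    simpa [g] using hT i e
  rw [Ultrafilter.coe_map] at hf
  let L := linearMapOfTendsto f g hf
  refine ⟨LinearMap.mkContinuous (WeakDual.toStrongDual.toLinearMap ∘ₗ L) C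
    fun e => mem_closedBall_zero_iff.1 (hfK e trivial), fun e w => ?_⟩
  exact ((WeakDual.eval_continuous w).tendsto _).comp (tendsto_pi_nhds.1 hf e)

theorem exists_projection_range_eq_annihilator (S : Set E)
    (P : StrongDual 𝕜 E →L[𝕜] StrongDual 𝕜 E) (hP : ∀ z, ∀ x ∈ S, P z x = z x)
    (hP_ker : ∀ z : StrongDual 𝕜 E, (∀ x ∈ S, z x = 0) → P z = 0) :
    ∃ Q : StrongDual 𝕜 E →L[𝕜] StrongDual 𝕜 E,
      Q.comp Q = Q ∧ Set.range Q = {z | ∀ x ∈ S, z x = 0} := by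
  let Q := ContinuousLinearMap.id 𝕜 (StrongDual 𝕜 E) - P
  have hQ_mem : ∀ z, ∀ x ∈ S, Q z x = 0 := fun z x hx => by simp [Q, hP z x hx]
  have hQ_id : ∀ z : StrongDual 𝕜 E, (∀ x ∈ S, z x = 0) → Q z = z := fun z hz => by
    simp [Q, hP_ker z hz]
  refine ⟨Q, ContinuousLinearMap.ext fun z => hQ_id _ (hQ_mem z), ?_⟩
  exact subset_antisymm (Set.range_subset_iff.2 hQ_mem) fun z hz => ⟨z, hQ_id z hz⟩

theorem exists_projection_range_eq_annihilator_of_tendsto [ProperSpace 𝕜] (S : Set E)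
    (T : ℕ → StrongDual 𝕜 E →L[𝕜] StrongDual 𝕜 E) {C : ℝ} (hT_bound : ∀ n z, ‖T n z‖ ≤ C * ‖z‖)
    (hT_lim : ∀ z, ∀ x ∈ S, Tendsto (fun n => T n z x) atTop (𝓝 (z x)))
    (hT_ker : ∀ n (z : StrongDual 𝕜 E), (∀ x ∈ S, z x = 0) → T n z = 0) :
    ∃ Q : StrongDual 𝕜 E →L[𝕜] StrongDual 𝕜 E,
      Q.comp Q = Q ∧ Set.range Q = {z | ∀ x ∈ S, z x = 0} := by
  obtain ⟨P, hP⟩ := exists_tendsto_apply_apply_of_norm_le (Ultrafilter.of atTop) T hT_bound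
  refine exists_projection_range_eq_annihilator S P (fun z x hx => ?_) fun z hz => ?_
  · exact tendsto_nhds_unique (hP z x) ((hT_lim z x hx).mono_left (Ultrafilter.of_le _))
  · ext w
    exact tendsto_nhds_unique (hP z w) (by simp [hT_ker _ z hz])

theorem comp_mem_of_forall_eq_sum_smul {κ : Type*} [Fintype κ]
    {M : Submodule 𝕜 (StrongDual 𝕜 E)} {u : E →L[𝕜] E} {g : κ → M} {v : κ → E}
    (hu : ∀ x, u x = ∑ i, (g i : StrongDual 𝕜 E) x • v i) (φ : StrongDual 𝕜 E) :
    φ.comp u ∈ M := by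
  have : φ.comp u = ∑ i, φ (v i) • (g i : StrongDual 𝕜 E) := by
    ext x
    simp [hu, mul_comm]
  rw [this]
  exact M.sum_mem fun i _ => M.smul_mem _ (g i).2

end

/-- `m z` is `u* (r z)` in the paper's notation, `r : Z* → X*` being the restriction. -/
theorem Submodule.exists_restrict_comp_mem_of_forall_eq_sum_smul {𝕜 Z : Type*}
    [NontriviallyNormedField 𝕜] [SeminormedAddCommGroup Z] [NormedSpace 𝕜 Z]
    {X : Submodule 𝕜 Z} {κ : Type*} [Fintype κ] {M : Submodule 𝕜 (StrongDual 𝕜 X)}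
    {u : X →L[𝕜] X} {g : κ → M} {v : κ → X}
    (hu : ∀ x, u x = ∑ i, (g i : StrongDual 𝕜 X) x • v i) :
    ∃ m : StrongDual 𝕜 Z →L[𝕜] M, (∀ z (x : X), (m z : StrongDual 𝕜 X) x = z (u x)) ∧
      ∀ z, ‖(m z : StrongDual 𝕜 X)‖ ≤ ‖u‖ * ‖z‖ := by
  refine ⟨((ContinuousLinearMap.compL 𝕜 X Z 𝕜).flip (X.subtypeL ∘L u)).codRestrict M
    fun z => comp_mem_of_forall_eq_sum_smul hu (z.comp X.subtypeL), fun _ _ => rfl, fun z => ?_⟩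
  calc ‖z.comp (X.subtypeL ∘L u)‖ ≤ ‖z‖ * (‖X.subtypeL‖ * ‖u‖) :=
        (z.opNorm_comp_le _).trans (by gcongr; exact X.subtypeL.opNorm_comp_le u)
    _ ≤ ‖z‖ * (1 * ‖u‖) := by gcongr; exact X.norm_subtypeL_le
    _ = ‖u‖ * ‖z‖ := by ring

theorem annihilator_complemented_of_boundedly_extendable_quasibasic_general
    {Z : Type*} [NormedAddCommGroup Z] [NormedSpace ℝ Z] [CompleteSpace Z]
    (X : Submodule ℝ Z) (hXc : IsClosed (X : Set Z))
    (M : Submodule ℝ (StrongDual ℝ X))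
    (π : M →L[ℝ] StrongDual ℝ Z)
    (hπext : ∀ (f : M) (x : X), (π f) (x : Z) = (f : StrongDual ℝ X) x)
    (u : ℕ → X →L[ℝ] X)
    (hform : ∀ n, ∃ (k : ℕ) (g : Fin k → M) (v : Fin k → X),
      ∀ x : X, u n x = ∑ i, ((g i : StrongDual ℝ X) x) • v i)
    (hconv : ∀ x : X, Tendsto (fun n => u n x) atTop (nhds x)) :
    ∃ Q : StrongDual ℝ Z →L[ℝ] StrongDual ℝ Z,
      Q.comp Q = Q ∧
      Set.range Q = {g : StrongDual ℝ Z | ∀ x ∈ X, g x = 0} := by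
  have : CompleteSpace X := hXc.completeSpace_coe
  obtain ⟨Cu, hCu⟩ : ∃ C, ∀ n, ‖u n‖ ≤ C := banach_steinhaus fun x =>
    let ⟨C, hC⟩ := (hconv x).norm.bddAbove_range
    ⟨C, fun n => hC ⟨n, rfl⟩⟩
  obtain ⟨Cπ, hCπ, hπ⟩ : ∃ C, 0 < C ∧ ∀ f : M, ‖π f‖ ≤ C * ‖f‖ := by
    -- instance search does not find this structure on a submodule of `StrongDual ℝ X`
    let : NormedSpace ℝ M := Submodule.normedSpace (R := ℝ) (E := StrongDual ℝ X) M
    exact SemilinearMapClass.bound_of_continuous π π.continuous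
  choose k g v hu using hform
  choose m hm hm_norm using fun n => X.exists_restrict_comp_mem_of_forall_eq_sum_smul (hu n)
  refine exists_projection_range_eq_annihilator_of_tendsto X (fun n => π ∘L m n) (C := Cπ * Cu)
    (fun n z => ?_) (fun z x hx => ?_) fun n z hz => ?_
  · calc ‖π (m n z)‖ ≤ Cπ * ‖(m n z : StrongDual ℝ X)‖ := hπ _
      _ ≤ Cπ * (Cu * ‖z‖) := by gcongr; exact (hm_norm n z).trans (by gcongr; exact hCu n)
      _ = Cπ * Cu * ‖z‖ := (mul_assoc _ _ _).symm
  · refine ((z.continuous.comp continuous_subtype_val).tendsto _ |>.comp (hconv ⟨x, hx⟩)).congr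
      fun n => ?_
    exact ((hπext _ _).trans (hm n z _)).symm
  · have : m n z = 0 := Subtype.ext <| ContinuousLinearMap.ext fun x =>
      (hm n z x).trans (hz _ (u n x).2)
    simp [this]

/-- Let `X` be a closed subspace of a Banach space `Z` and `M ⊆ X*` a
closed subspace that is boundedly extendable onto `Z` (via an isomorphic embedding
`π : M → Z*` with `π(f)(x) = f(x)` for `x ∈ X`). If `M` is quasibasic in `X*`, with
witnessing finite-rank operators `u n x = ∑ i, x*_{i,n}(x) • x_{i,n}` (`x*_{i,n} ∈ M`)
converging pointwise to the identity, then `X^⊥ = {z* ∈ Z* : z*|_X = 0}` is a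
complemented subspace of `Z*`. -/
theorem annihilator_complemented_of_boundedly_extendable_quasibasic
    {Z : Type*} [NormedAddCommGroup Z] [NormedSpace ℝ Z] [CompleteSpace Z]
    (X : Submodule ℝ Z) (hXc : IsClosed (X : Set Z))
    (M : Submodule ℝ (StrongDual ℝ X)) (hMc : IsClosed (M : Set (StrongDual ℝ X)))
    (π : M →L[ℝ] StrongDual ℝ Z)
    (hπemb : ∃ c : ℝ, 0 < c ∧ ∀ f : M, c * ‖f‖ ≤ ‖π f‖)
    (hπext : ∀ (f : M) (x : X), (π f) (x : Z) = (f : StrongDual ℝ X) x)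
    (u : ℕ → X →L[ℝ] X)
    (hform : ∀ n, ∃ (k : ℕ) (g : Fin k → M) (v : Fin k → X),
      ∀ x : X, u n x = ∑ i, ((g i : StrongDual ℝ X) x) • v i)
    (hconv : ∀ x : X, Tendsto (fun n => u n x) atTop (nhds x)) :
    ∃ Q : StrongDual ℝ Z →L[ℝ] StrongDual ℝ Z,
      Q.comp Q = Q ∧
      Set.range Q = {g : StrongDual ℝ Z | ∀ x ∈ X, g x = 0} :=
  annihilator_complemented_of_boundedly_extendable_quasibasic_general X hXc M π hπext u hform hconv
end

section
/- Fix p > 2 and let X_n be the span of the first n unit vectors of l_p (X_0 = {0}). Then the bidual K(X_n) of the Bellenot space J(X_n) does not contain a subspace isomorphic to l_p. More precisely, if (g_k) is a sequence in K(X_n) of the disjointly supported eventually-constant form g_k = (0,...,0, x_{n(k-1)+2}^{m(k)}, ..., x_{n(k)-1}^{m(k)}, x^{m(k)}, x^{m(k)}, ...), then for all scalars (a_k): 2||sum_{k=1}^r a_k g_k||_K^2 ≥ sum_{k=1}^r a_k^2 ||g_k||_K^2, and hence (g_k) cannot be equivalent to the unit vector basis of l_p when inf_k ||g_k||_K > 0,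 since p > 2. -/
/-!
For `x` vanishing at `0` and eventually constant, `2 ‖x‖_K²` is the supremum of the `J`-sums
`∑ ‖x (P i) - x (P (i + 1))‖² + ‖x (P m)‖²` over finite increasing chains `P`, since a chain can
be cut where a truncation of `x` becomes zero. A `J`-sum is at most twice the larger of its two
parts, so the increments of `g k` along some chain, clamped into the block `[n (k - 1), n k]`,
almost reach `‖g k‖_K²`. On that block the increments of `∑ a k • g k` are those of `a k • g k`;
concatenating the chains of all blocks gives the lower `ℓ₂`-estimate. With `a = 1` it forces
`r · inf ‖g k‖_K² ≲ r ^ (2 / p)`, impossible for `p > 2`.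
-/
open Finset

open Filter Topology

section Chains

variable {E : Type*} [SeminormedAddCommGroup E]

def trunc (x : ℕ → E) (N : ℕ) : ℕ → E := fun k => if k ≤ N then x k else 0

def chainSq (x : ℕ → E) (P : ℕ → ℕ) (m : ℕ) : ℝ :=
  ∑ i ∈ range m, ‖x (P i) - x (P (i + 1))‖ ^ 2

def jsum (x : ℕ → E) (P : ℕ → ℕ) (m : ℕ) : ℝ := chainSq x P m + ‖x (P m)‖ ^ 2

def jset (x : ℕ → E) : Set ℝ := {s | ∃ P m, StrictMono P ∧ s = jsum x P m}

theorem jnormSq_eq_sSup_jset (x : ℕ → E) : jnormSq x = sSup (jset x) := by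
  unfold jnormSq
  congr 1
  ext s
  constructor
  · rintro ⟨k, P, -, hP, rfl⟩
    exact ⟨P, k - 1, hP, rfl⟩
  · rintro ⟨P, m, hP, rfl⟩
    exact ⟨m + 1, P, m.succ_pos, hP, rfl⟩

theorem jset_nonempty (x : ℕ → E) : (jset x).Nonempty := ⟨_, id, 0, strictMono_id, rfl⟩

theorem knorm_nonneg (x : ℕ → E) : 0 ≤ knorm x :=
  Real.iSup_nonneg fun _ => Real.sqrt_nonneg _

theorem chainSq_nonneg (x : ℕ → E) (P : ℕ → ℕ) (m : ℕ) : 0 ≤ chainSq x P m :=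
  sum_nonneg fun _ _ => sq_nonneg _

theorem chainSq_le_jsum (x : ℕ → E) (P : ℕ → ℕ) (m : ℕ) : chainSq x P m ≤ jsum x P m :=
  le_add_of_nonneg_right (sq_nonneg _)

theorem jsum_nonneg (x : ℕ → E) (P : ℕ → ℕ) (m : ℕ) : 0 ≤ jsum x P m :=
  (chainSq_nonneg x P m).trans (chainSq_le_jsum x P m)

theorem chainSq_succ (x : ℕ → E) (P : ℕ → ℕ) (m : ℕ) :
    chainSq x P (m + 1) = chainSq x P m + ‖x (P m) - x (P (m + 1))‖ ^ 2 :=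
  sum_range_succ _ _

def chainAppend (P : ℕ → ℕ) (M : ℕ) (Q : ℕ → ℕ) : ℕ → ℕ :=
  fun i => if i ≤ M then P i else Q (i - (M + 1))

section Append

variable {P Q : ℕ → ℕ} {M : ℕ}

theorem chainAppend_of_le {i : ℕ} (h : i ≤ M) : chainAppend P M Q i = P i := if_pos h

theorem chainAppend_add (i : ℕ) : chainAppend P M Q (M + 1 + i) = Q i := by
  rw [chainAppend, if_neg (by omega), Nat.add_sub_cancel_left]

theorem chainSq_chainAppend (x : ℕ → E) (m : ℕ) :
    chainSq x (chainAppend P M Q) (M + 1 + m) =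
      chainSq x P M + ‖x (P M) - x (Q 0)‖ ^ 2 + chainSq x Q m := by
  unfold chainSq
  rw [sum_range_add, sum_range_succ, chainAppend_of_le le_rfl, ← add_zero (M + 1),
    chainAppend_add, add_zero]
  congr 2
  · refine sum_congr rfl fun i hi => ?_
    have hi := mem_range.1 hi
    rw [chainAppend_of_le hi.le, chainAppend_of_le hi]
  · ext i
    rw [chainAppend_add, add_assoc, chainAppend_add]

theorem monotone_chainAppend (hP : Monotone P) (hQ : Monotone Q) (h : P M ≤ Q 0) :
    Monotone (chainAppend P M Q) := by
  refine monotone_nat_of_le_succ fun i => ?_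
  unfold chainAppend
  split_ifs with h₁ h₂ h₂
  · exact hP i.le_succ
  · rwa [show i = M by omega, show M + 1 - (M + 1) = 0 by omega]
  · omega
  · exact hQ (by omega)

theorem strictMono_chainAppend (hP : StrictMono P) (hQ : StrictMono Q) (h : P M < Q 0) :
    StrictMono (chainAppend P M Q) := by
  refine strictMono_nat_of_lt_succ fun i => ?_
  unfold chainAppend
  split_ifs with h₁ h₂ h₂
  · exact hP i.lt_succ_self
  · rwa [show i = M by omega, show M + 1 - (M + 1) = 0 by omega]
  · omega
  · exact hQ (by omega)

end Append

/-- Removing repetitions from a monotone chain does not change its squared increments. -/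
theorem exists_strictMono_chainSq_eq (x : ℕ → E) {c : ℕ → ℕ} (hc : Monotone c) (M : ℕ) :
    ∃ Q m, StrictMono Q ∧ Q 0 = c 0 ∧ Q m = c M ∧ chainSq x c M = chainSq x Q m := by
  induction M with
  | zero => exact ⟨(c 0 + ·), 0, strictMono_id.const_add _, rfl, rfl, rfl⟩
  | succ M ih =>
    obtain ⟨Q, m, hQ, hQ0, hQm, hsum⟩ := ih
    rcases (hc M.le_succ).eq_or_lt with heq | hlt
    · refine ⟨Q, m, hQ, hQ0, hQm.trans heq, ?_⟩
      rw [chainSq_succ, hsum, heq, sub_self, norm_zero]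
      ring
    · refine ⟨chainAppend Q m (c (M + 1) + ·), m + 1 + 0, strictMono_chainAppend hQ
        (strictMono_id.const_add _) (by simpa [hQm] using hlt), ?_, chainAppend_add 0, ?_⟩
      · rw [chainAppend_of_le m.zero_le, hQ0]
      · rw [chainSq_chainAppend, chainSq_succ, hsum, hQm]
        simp [chainSq]

theorem jsum_trunc_of_le (x : ℕ → E) {P : ℕ → ℕ} (hP : Monotone P) {N m : ℕ}
    (h : P m ≤ N) : jsum (trunc x N) P m = jsum x P m := by
  have hx : ∀ i ≤ m, trunc x N (P i) = x (P i) := fun i hi => if_pos ((hP hi).trans h)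
  unfold jsum chainSq
  rw [hx m le_rfl]
  congr 1
  refine sum_congr rfl fun i hi => ?_
  have hi := mem_range.1 hi
  rw [hx i hi.le, hx (i + 1) hi]

/-- Past the truncation point a chain only adds zero terms, so it can be cut there. -/
theorem exists_jsum_trunc_le (x : ℕ → E) {P : ℕ → ℕ} (hP : Monotone P) (N m : ℕ) :
    ∃ m', jsum (trunc x N) P m ≤ jsum x P m' := by
  induction m with
  | zero =>
    by_cases h : P 0 ≤ N
    · exact ⟨0, (jsum_trunc_of_le x hP h).le⟩
    · refine ⟨0, ?_⟩
      simp [jsum, chainSq, trunc, h]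
  | succ m ih =>
    by_cases h : P (m + 1) ≤ N
    · exact ⟨m + 1, (jsum_trunc_of_le x hP h).le⟩
    · obtain ⟨m', hm'⟩ := ih
      refine ⟨m', le_trans (le_of_eq ?_) hm'⟩
      have hzero : trunc x N (P (m + 1)) = 0 := if_neg h
      simp only [jsum, chainSq_succ, hzero, sub_zero, norm_zero]
      ring

theorem exists_two_mul_lt_jsum {x : ℕ → E} {t : ℝ} (ht : t < knorm x ^ 2) :
    ∃ P m, StrictMono P ∧ 2 * t < jsum x P m := by
  rcases lt_or_ge t 0 with ht0 | ht0
  · exact ⟨id, 0, strictMono_id, by linarith [jsum_nonneg x id 0]⟩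
  have hsqrt : √t < knorm x := by
    simpa [Real.sqrt_sq (knorm_nonneg x)] using Real.sqrt_lt_sqrt ht0 ht
  obtain ⟨N, hN⟩ : ∃ N, √t < jnorm (trunc x N) := exists_lt_of_lt_ciSup hsqrt
  have hJ : 2 * t < sSup (jset (trunc x N)) := by
    rw [← jnormSq_eq_sSup_jset]
    linarith [(Real.sqrt_lt_sqrt_iff ht0).1 hN]
  obtain ⟨_, ⟨P, m, hP, rfl⟩, hlt⟩ := exists_lt_of_lt_csSup (jset_nonempty _) hJ
  obtain ⟨m', hm'⟩ := exists_jsum_trunc_le x hP.monotone N m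
  exact ⟨P, m', hP, hlt.trans_le hm'⟩

section Bounded

variable {x : ℕ → E} {B : ℝ}

theorem mem_upperBounds_jset_trunc (hB : ∀ P m, Monotone P → jsum x P m ≤ B) (N : ℕ) :
    B ∈ upperBounds (jset (trunc x N)) := by
  rintro _ ⟨P, m, hP, rfl⟩
  obtain ⟨m', hm'⟩ := exists_jsum_trunc_le x hP.monotone N m
  exact hm'.trans (hB P m' hP.monotone)

theorem jsum_le_two_mul_knorm_sq (hB : ∀ P m, Monotone P → jsum x P m ≤ B) {P : ℕ → ℕ}
    (hP : Monotone P) (m : ℕ) : jsum x P m ≤ 2 * knorm x ^ 2 := by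
  obtain ⟨Q, m', hQ, -, hQm, hsum⟩ := exists_strictMono_chainSq_eq x hP m
  set N := Q m'
  have hPQ : jsum x P m = jsum (trunc x N) Q m' := by
    rw [jsum_trunc_of_le x hQ.monotone le_rfl]
    simp only [jsum, hsum, N, hQm]
  have hJ : jsum x P m ≤ jnormSq (trunc x N) := by
    rw [hPQ, jnormSq_eq_sSup_jset]
    exact le_csSup ⟨B, mem_upperBounds_jset_trunc hB N⟩ ⟨Q, m', hQ, rfl⟩
  have hjnorm : ∀ N, jnormSq (trunc x N) ≤ B := fun N => jnormSq_eq_sSup_jset (trunc x N) ▸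
    csSup_le (jset_nonempty _) (mem_upperBounds_jset_trunc hB N)
  have hK : jnorm (trunc x N) ≤ knorm x :=
    le_ciSup (f := fun N => jnorm (trunc x N))
      ⟨√(B / 2), Set.forall_mem_range.2 fun N => Real.sqrt_le_sqrt (by linarith [hjnorm N])⟩ N
  have hsq : jnormSq (trunc x N) = 2 * jnorm (trunc x N) ^ 2 := by
    rw [jnorm, Real.sq_sqrt (by linarith [jsum_nonneg x P m])]
    ring
  calc jsum x P m ≤ jnormSq (trunc x N) := hJ
    _ = 2 * jnorm (trunc x N) ^ 2 := hsq
    _ ≤ 2 * knorm x ^ 2 := by gcongr; exact Real.sqrt_nonneg _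

end Bounded

end Chains

section Estimates

variable {E : Type*} [SeminormedAddCommGroup E]

theorem apply_max_min_eq {f : ℕ → E} {L R : ℕ} (hLR : L ≤ R) (h0 : ∀ i ≤ L, f i = 0)
    (hR : ∀ i, R ≤ i → f i = f R) (i : ℕ) : f (max L (min i R)) = f i := by
  rcases le_total i L with hiL | hLi
  · rw [max_eq_left (min_le_of_left_le hiL), h0 i hiL, h0 L le_rfl]
  rcases le_total i R with hiR | hRi
  · rw [min_eq_left hiR, max_eq_right hLi]
  · rw [min_eq_right hRi, max_eq_right hLR, hR i hRi]

/-- Clamping a near-optimal chain into `[L, R]` does not change `f` along it; as its `J`-sum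
exceeds `2 * t`, either its increments or its final term, an increment from `L`, exceed `t`. -/
theorem exists_chain_Icc_lt_chainSq {f : ℕ → E} {L R : ℕ} (hLR : L ≤ R)
    (h0 : ∀ i ≤ L, f i = 0) (hR : ∀ i, R ≤ i → f i = f R) {t : ℝ} (ht : t < knorm f ^ 2) :
    ∃ c M, Monotone c ∧ L ≤ c 0 ∧ c M ≤ R ∧ t < chainSq f c M := by
  obtain ⟨P, m, hP, hPt⟩ := exists_two_mul_lt_jsum ht
  set c : ℕ → ℕ := fun i => max L (min (P i) R)
  have hc : Monotone c := fun i j hij => max_le_max le_rfl (min_le_min_right R (hP.monotone hij))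
  have hcL : ∀ i, L ≤ c i := fun i => le_max_left _ _
  have hcR : ∀ i, c i ≤ R := fun i => max_le hLR (min_le_right _ _)
  have hjsum : jsum f c m = jsum f P m := by
    simp only [jsum, chainSq, c, apply_max_min_eq hLR h0 hR]
  rcases le_or_gt (‖f (c m)‖ ^ 2) t with hlast | hlast
  · exact ⟨c, m, hc, hcL 0, hcR m, by rw [jsum] at hjsum; linarith⟩
  · refine ⟨fun i => if i = 0 then L else c m, 1, fun i j hij => ?_, le_rfl, hcR m, ?_⟩
    · dsimp only
      split_ifs <;> first | exact le_rfl | exact hcL m | omega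
    · simpa [chainSq, h0 L le_rfl] using hlast

theorem sum_norm_sub_le_of_monotone (x : ℕ → E) {P : ℕ → ℕ} (hP : Monotone P) (m : ℕ) :
    ∑ i ∈ range m, ‖x (P i) - x (P (i + 1))‖ ≤ ∑ j ∈ range (P m), ‖x j - x (j + 1)‖ := by
  induction m with
  | zero => exact sum_nonneg fun _ _ => norm_nonneg _
  | succ m ih =>
    rw [sum_range_succ, ← sum_range_add_sum_Ico _ (hP m.le_succ)]
    gcongr
    simpa only [dist_eq_norm] using dist_le_Ico_sum_dist x (hP m.le_succ)

theorem jsum_le_of_eventually_const {x : ℕ → E} (h0 : x 0 = 0) {R : ℕ}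
    (hR : ∀ i, R ≤ i → x i = x R) {P : ℕ → ℕ} (hP : Monotone P) (m : ℕ) :
    jsum x P m ≤ 2 * (∑ j ∈ range R, ‖x j - x (j + 1)‖) ^ 2 := by
  set V := ∑ j ∈ range R, ‖x j - x (j + 1)‖
  have hV : ∀ M, ∑ j ∈ range M, ‖x j - x (j + 1)‖ ≤ V := by
    intro M
    rcases le_total M R with hMR | hRM
    · exact sum_le_sum_of_subset_of_nonneg (range_mono hMR) fun _ _ _ => norm_nonneg _
    · have htail : ∑ j ∈ Ico R M, ‖x j - x (j + 1)‖ = 0 := sum_eq_zero fun j hj => by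
        rw [hR j (mem_Ico.1 hj).1, hR (j + 1) ((mem_Ico.1 hj).1.trans j.le_succ), sub_self,
          norm_zero]
      rw [← sum_range_add_sum_Ico _ hRM, htail, add_zero]
  have hchain : chainSq x P m ≤ V ^ 2 :=
    (sum_sq_le_sq_sum_of_nonneg fun _ _ => norm_nonneg _).trans <|
      pow_le_pow_left₀ (sum_nonneg fun _ _ => norm_nonneg _)
        ((sum_norm_sub_le_of_monotone x hP m).trans (hV _)) 2
  have hlast : ‖x (P m)‖ ≤ V := by
    have h := dist_le_range_sum_dist x (P m)
    simp only [dist_eq_norm, h0, zero_sub, norm_neg] at h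
    exact h.trans (hV _)
  have := pow_le_pow_left₀ (norm_nonneg _) hlast 2
  rw [jsum]
  linarith

theorem exists_chainSq_ge_sum_blocks (x : ℕ → E) (b : ℕ → ℕ) (w : ℕ → ℝ) (r : ℕ)
    (hw : ∀ k ∈ Icc 1 r, ∃ c M, Monotone c ∧ b (k - 1) ≤ c 0 ∧ c M ≤ b k ∧ w k ≤ chainSq x c M) :
    ∃ c M, Monotone c ∧ c M ≤ b r ∧ ∑ k ∈ Icc 1 r, w k ≤ chainSq x c M := by
  induction r with
  | zero => exact ⟨fun _ => b 0, 0, monotone_const, le_rfl, by simp [chainSq]⟩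
  | succ r ih =>
    obtain ⟨c, M, hc, hcM, hsum⟩ :=
      ih fun k hk => hw k (Icc_subset_Icc_right r.le_succ hk)
    obtain ⟨d, M', hd, hd0, hdM, hwd⟩ := hw (r + 1) (by simp)
    refine ⟨chainAppend c M d, M + 1 + M', monotone_chainAppend hc hd (hcM.trans hd0),
      by rwa [chainAppend_add], ?_⟩
    rw [sum_Icc_succ_top (by omega), chainSq_chainAppend]
    linarith [sq_nonneg ‖x (c M) - x (d 0)‖]

theorem chainSq_eq_sq_mul_chainSq [NormedSpace ℝ E] {x y : ℕ → E} {a : ℝ} {L R : ℕ}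
    (h : ∀ i j, L ≤ i → i ≤ R → L ≤ j → j ≤ R → x i - x j = a • (y i - y j))
    {c : ℕ → ℕ} (hc : Monotone c) {M : ℕ} (hc0 : L ≤ c 0) (hcM : c M ≤ R) :
    chainSq x c M = a ^ 2 * chainSq y c M := by
  unfold chainSq
  rw [mul_sum]
  refine sum_congr rfl fun i hi => ?_
  have hi := mem_range.1 hi
  rw [h _ _ (hc0.trans (hc i.zero_le)) ((hc hi.le).trans hcM)
      (hc0.trans (hc (i + 1).zero_le)) ((hc hi).trans hcM),
    norm_smul, mul_pow, Real.norm_eq_abs, sq_abs]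

end Estimates

section Blocks

variable {E : Type*} [SeminormedAddCommGroup E] [NormedSpace ℝ E] {g : ℕ → ℕ → E} {n : ℕ → ℕ}

theorem sum_smul_sub_sum_smul_of_mem_block (hn : Monotone n)
    (hsupp : ∀ k, 1 ≤ k → ∀ i, i ≤ n (k - 1) → g k i = 0)
    (hconst : ∀ k, 1 ≤ k → ∀ i, n k ≤ i → g k i = g k (n k)) (a : ℕ → ℝ) {r k : ℕ}
    (hk : k ∈ Icc 1 r) {i j : ℕ} (hi : n (k - 1) ≤ i) (hi' : i ≤ n k) (hj : n (k - 1) ≤ j)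
    (hj' : j ≤ n k) :
    ∑ b ∈ Icc 1 r, a b • g b i - ∑ b ∈ Icc 1 r, a b • g b j = a k • (g k i - g k j) := by
  rw [← sum_sub_distrib, sum_eq_single_of_mem k hk fun b hb hbk => ?_, smul_sub]
  have hb := (mem_Icc.1 hb).1
  rcases hbk.lt_or_gt with hlt | hgt
  · have hnb : n b ≤ n (k - 1) := hn (by omega)
    rw [hconst b hb i (hnb.trans hi), hconst b hb j (hnb.trans hj), sub_self]
  · have hnb : n k ≤ n (b - 1) := hn (by omega)
    rw [hsupp b hb i (hi'.trans hnb), hsupp b hb j (hj'.trans hnb), smul_zero, sub_self]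

theorem sum_sq_mul_knorm_sq_le (hn : Monotone n)
    (hsupp : ∀ k, 1 ≤ k → ∀ i, i ≤ n (k - 1) → g k i = 0)
    (hconst : ∀ k, 1 ≤ k → ∀ i, n k ≤ i → g k i = g k (n k)) (r : ℕ) (a : ℕ → ℝ) :
    ∑ k ∈ Icc 1 r, a k ^ 2 * knorm (g k) ^ 2 ≤
      2 * knorm (fun i => ∑ k ∈ Icc 1 r, a k • g k i) ^ 2 := by
  set G := fun i => ∑ k ∈ Icc 1 r, a k • g k i
  have hG0 : G 0 = 0 := sum_eq_zero fun k hk => by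
    rw [hsupp k (mem_Icc.1 hk).1 0 (Nat.zero_le _), smul_zero]
  have hGconst : ∀ i, n r ≤ i → G i = G (n r) := fun i hi => sum_congr rfl fun k hk => by
    obtain ⟨hk1, hkr⟩ := mem_Icc.1 hk
    rw [hconst k hk1 i ((hn hkr).trans hi), hconst k hk1 (n r) (hn hkr)]
  have happrox : ∀ ε > 0, ∑ k ∈ Icc 1 r, a k ^ 2 * (knorm (g k) ^ 2 - ε) ≤ 2 * knorm G ^ 2 := by
    intro ε hε
    obtain ⟨c, M, hc, -, hsum⟩ := exists_chainSq_ge_sum_blocks G n _ r fun k hk => by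
      obtain ⟨c, M, hc, hc0, hcM, hlt⟩ := exists_chain_Icc_lt_chainSq (hn (k.sub_le 1))
        (hsupp k (mem_Icc.1 hk).1) (hconst k (mem_Icc.1 hk).1) (sub_lt_self _ hε)
      refine ⟨c, M, hc, hc0, hcM, ?_⟩
      rw [chainSq_eq_sq_mul_chainSq (fun i j hi hi' hj hj' =>
        sum_smul_sub_sum_smul_of_mem_block hn hsupp hconst a hk hi hi' hj hj') hc hc0 hcM]
      exact mul_le_mul_of_nonneg_left hlt.le (sq_nonneg _)
    exact hsum.trans <| (chainSq_le_jsum G c M).trans <| jsum_le_two_mul_knorm_sq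
      (fun P m hP => jsum_le_of_eventually_const hG0 hGconst hP m) hc M
  have hlim : Tendsto (fun ε => ∑ k ∈ Icc 1 r, a k ^ 2 * (knorm (g k) ^ 2 - ε)) (𝓝[>] 0)
      (𝓝 (∑ k ∈ Icc 1 r, a k ^ 2 * (knorm (g k) ^ 2 - 0))) :=
    tendsto_nhdsWithin_of_tendsto_nhds ((continuous_finsetSum _ fun k _ => by fun_prop).tendsto 0)
  simpa using le_of_tendsto hlim (eventually_nhdsWithin_of_forall happrox)

end Blocks

theorem not_forall_mul_le_mul_rpow {δ K q : ℝ} (hδ : 0 < δ) (hq : q < 1) :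
    ¬ ∀ r : ℕ, 0 < r → δ * r ≤ K * (r : ℝ) ^ q := by
  intro h
  have hgrow : Tendsto (fun r : ℕ => (r : ℝ) ^ (1 - q)) atTop atTop :=
    (tendsto_rpow_atTop (sub_pos.2 hq)).comp tendsto_natCast_atTop_atTop
  obtain ⟨r, hKr, hr⟩ := ((hgrow.eventually_gt_atTop (K / δ)).and (eventually_gt_atTop 0)).exists
  have hr' : (0 : ℝ) < r := Nat.cast_pos.2 hr
  have hlt : K * (r : ℝ) ^ q < δ * r :=
    calc K * (r : ℝ) ^ q < δ * (r : ℝ) ^ (1 - q) * (r : ℝ) ^ q :=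
          mul_lt_mul_of_pos_right ((div_lt_iff₀' hδ).1 hKr) (Real.rpow_pos_of_pos hr' q)
      _ = δ * r := by rw [mul_assoc, ← Real.rpow_add hr', sub_add_cancel, Real.rpow_one]
  exact (h r hr).not_gt hlt

theorem bellenot_bidual_no_lp_copy_general
    (p : ℝ) (hp : 2 < p) [Fact (1 ≤ ENNReal.ofReal p)]
    (g : ℕ → ℕ → lp (fun _ : ℕ => ℝ) (ENNReal.ofReal p))
    (n : ℕ → ℕ) (hn : StrictMono n)
    -- `g k` vanishes up to index `n (k-1) + 1`:
    (hsupp : ∀ k, 1 ≤ k → ∀ i, i ≤ n (k - 1) + 1 → g k i = 0)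
    -- `g k` is eventually constant from index `n k` on:
    (hconst : ∀ k, 1 ≤ k → ∀ i, n k ≤ i → g k i = g k (n k)) :
    (∀ (r : ℕ) (a : ℕ → ℝ),
      ∑ k ∈ Icc 1 r, (a k) ^ 2 * (knorm (g k)) ^ 2 ≤
        2 * (knorm (fun i => ∑ k ∈ Icc 1 r, a k • g k i)) ^ 2) ∧
    ((∃ ε : ℝ, 0 < ε ∧ ∀ k, 1 ≤ k → ε ≤ knorm (g k)) →
      ¬ ∃ c C : ℝ, 0 < c ∧ ∀ (r : ℕ) (a : ℕ → ℝ),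
        c * (∑ k ∈ Icc 1 r, |a k| ^ p) ^ (1 / p) ≤
            knorm (fun i => ∑ k ∈ Icc 1 r, a k • g k i) ∧
          knorm (fun i => ∑ k ∈ Icc 1 r, a k • g k i) ≤
            C * (∑ k ∈ Icc 1 r, |a k| ^ p) ^ (1 / p)) := by
  have hl2 := sum_sq_mul_knorm_sq_le hn.monotone (fun k hk i hi => hsupp k hk i (by omega)) hconst
  refine ⟨hl2, fun ⟨ε, hε, hεg⟩ ⟨c, C, _, hequiv⟩ => ?_⟩
  refine not_forall_mul_le_mul_rpow (pow_pos hε 2) (K := 2 * C ^ 2)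
    ((div_lt_one (by linarith)).2 hp) fun r hr => ?_
  have hupper := (hequiv r fun _ => 1).2
  simp only [abs_one, Real.one_rpow, sum_const, Nat.card_Icc, add_tsub_cancel_right,
    nsmul_eq_mul, mul_one] at hupper
  calc ε ^ 2 * r = ∑ k ∈ Icc 1 r, ε ^ 2 := by simp [mul_comm]
    _ ≤ ∑ k ∈ Icc 1 r, (1 : ℝ) ^ 2 * knorm (g k) ^ 2 := sum_le_sum fun k hk => by
      rw [one_pow, one_mul]
      exact pow_le_pow_left₀ hε.le (hεg k (mem_Icc.1 hk).1) 2
    _ ≤ 2 * knorm (fun i => ∑ k ∈ Icc 1 r, (1 : ℝ) • g k i) ^ 2 := hl2 r _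
    _ ≤ 2 * (C * (r : ℝ) ^ (1 / p)) ^ 2 := by gcongr; exact knorm_nonneg _
    _ = 2 * C ^ 2 * (r : ℝ) ^ (2 / p) := by
      rw [mul_pow, ← Real.rpow_mul_natCast (Nat.cast_nonneg r)]
      ring_nf

/-- Fix `p > 2` and `X n` the span of the first `n` unit vectors of
`ℓ_p`.  If `(g k)` is a sequence of elements of `K(X n)` of the disjointly supported
eventually constant form `g k = (0, …, 0, x^{m k}_{n(k-1)+2}, …, x^{m k}_{n k − 1},
x^{m k}, x^{m k}, …)`, then `2 ‖∑ a k • g k‖_K² ≥ ∑ a k² ‖g k‖_K²`; hence, when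
`inf_k ‖g k‖_K > 0`, the sequence `(g k)` is not equivalent to the unit vector
basis of `ℓ_p` (since `p > 2`). -/
theorem bellenot_bidual_no_lp_copy
    (p : ℝ) (hp : 2 < p) [Fact (1 ≤ ENNReal.ofReal p)]
    (g : ℕ → ℕ → lp (fun _ : ℕ => ℝ) (ENNReal.ofReal p))
    -- the entries of each `g k` lie in the corresponding `X i`:
    (hmem : ∀ k i j, i ≤ j → (g k i : ∀ _ : ℕ, ℝ) j = 0)
    (n : ℕ → ℕ) (hn : StrictMono n)
    -- `g k` vanishes up to index `n (k-1) + 1`: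
    (hsupp : ∀ k, 1 ≤ k → ∀ i, i ≤ n (k - 1) + 1 → g k i = 0)
    -- `g k` is eventually constant from index `n k` on:
    (hconst : ∀ k, 1 ≤ k → ∀ i, n k ≤ i → g k i = g k (n k)) :
    (∀ (r : ℕ) (a : ℕ → ℝ),
      ∑ k ∈ Icc 1 r, (a k) ^ 2 * (knorm (g k)) ^ 2 ≤
        2 * (knorm (fun i => ∑ k ∈ Icc 1 r, a k • g k i)) ^ 2) ∧
    ((∃ ε : ℝ, 0 < ε ∧ ∀ k, 1 ≤ k → ε ≤ knorm (g k)) →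
      ¬ ∃ c C : ℝ, 0 < c ∧ ∀ (r : ℕ) (a : ℕ → ℝ),
        c * (∑ k ∈ Icc 1 r, |a k| ^ p) ^ (1 / p) ≤
            knorm (fun i => ∑ k ∈ Icc 1 r, a k • g k i) ∧
          knorm (fun i => ∑ k ∈ Icc 1 r, a k • g k i) ≤
            C * (∑ k ∈ Icc 1 r, |a k| ^ p) ^ (1 / p)) :=
  bellenot_bidual_no_lp_copy_general p hp g n hn hsupp hconst
end

section
/- Let Z be a Banach space such that Z**/Z contains no infinite-dimensional subspace isomorphic to a dual space. Then every closed norming subspace of Z* has finite codimension. -/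
open NormedSpace

namespace NormedSpace

/-- The topological dual of a seminormed space `E` (as in the older Mathlib). -/
abbrev Dual (𝕜 : Type*) [NontriviallyNormedField 𝕜] (E : Type*) [SeminormedAddCommGroup E]
    [NormedSpace 𝕜 E] : Type _ :=
  E →L[𝕜] 𝕜

end NormedSpace

section AuxNorming

/-- The quotient map as a continuous linear map. -/
noncomputable def NormingAux.mkCLM {V : Type*} [SeminormedAddCommGroup V] [NormedSpace ℝ V]
    (S : Submodule ℝ V) : V →L[ℝ] V ⧸ S :=
  S.mkQ.mkContinuous 1 (fun x => by simpa [one_mul] using Submodule.Quotient.norm_mk_le S x)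

@[simp] theorem NormingAux.mkCLM_apply {V : Type*} [SeminormedAddCommGroup V] [NormedSpace ℝ V]
    (S : Submodule ℝ V) (x : V) : NormingAux.mkCLM S x = Submodule.Quotient.mk x := rfl

/-- Precomposition with a continuous linear map, as a linear map between duals. -/
noncomputable def NormingAux.precompLM {V W : Type*} [SeminormedAddCommGroup V] [NormedSpace ℝ V]
    [SeminormedAddCommGroup W] [NormedSpace ℝ W] (q : V →L[ℝ] W) :
    Dual ℝ W →ₗ[ℝ] Dual ℝ V where
  toFun φ := φ.comp q
  map_add' φ ψ := by ext x; simp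
  map_smul' a φ := by ext x; simp

@[simp] theorem NormingAux.precompLM_apply {V W : Type*} [SeminormedAddCommGroup V]
    [NormedSpace ℝ V] [SeminormedAddCommGroup W] [NormedSpace ℝ W] (q : V →L[ℝ] W)
    (φ : Dual ℝ W) (x : V) : NormingAux.precompLM q φ x = φ (q x) := rfl

theorem NormingAux.precompLM_injective {V W : Type*} [SeminormedAddCommGroup V] [NormedSpace ℝ V]
    [SeminormedAddCommGroup W] [NormedSpace ℝ W] {q : V →L[ℝ] W}
    (hq : Function.Surjective q) : Function.Injective (NormingAux.precompLM q) := by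
  intro φ ψ hh
  ext x
  obtain ⟨y, rfl⟩ := hq x
  exact ContinuousLinearMap.ext_iff.mp hh y

/-- Precomposition with a continuous linear map, as a continuous linear map between duals. -/
noncomputable def NormingAux.precompCLM {V W : Type*} [SeminormedAddCommGroup V] [NormedSpace ℝ V]
    [SeminormedAddCommGroup W] [NormedSpace ℝ W] (q : V →L[ℝ] W) :
    Dual ℝ W →L[ℝ] Dual ℝ V :=
  (NormingAux.precompLM q).mkContinuous ‖q‖ (fun φ => by
    calc ‖φ.comp q‖ ≤ ‖φ‖ * ‖q‖ := ContinuousLinearMap.opNorm_comp_le _ _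
      _ = ‖q‖ * ‖φ‖ := mul_comm _ _)

@[simp] theorem NormingAux.precompCLM_apply {V W : Type*} [SeminormedAddCommGroup V]
    [NormedSpace ℝ V] [SeminormedAddCommGroup W] [NormedSpace ℝ W] (q : V →L[ℝ] W)
    (φ : Dual ℝ W) : NormingAux.precompCLM q φ = φ.comp q := rfl

/-- Continuous lift of a functional vanishing on `N` to the quotient. -/
noncomputable def NormingAux.liftCLM {F : Type*} [SeminormedAddCommGroup F] [NormedSpace ℝ F]
    (N : Submodule ℝ F) (φ : Dual ℝ F) (hle : N ≤ LinearMap.ker (φ : F →ₗ[ℝ] ℝ)) :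
    Dual ℝ (F ⧸ N) where
  toLinearMap := N.liftQ (φ : F →ₗ[ℝ] ℝ) hle
  cont := by
    show Continuous (N.liftQ (φ : F →ₗ[ℝ] ℝ) hle)
    rw [N.isOpenQuotientMap_mkQ.isQuotientMap.continuous_iff]
    exact φ.continuous

/-- The dual of an infinite-dimensional normed space is infinite-dimensional. -/
theorem NormingAux.dual_infinite {V : Type*} [NormedAddCommGroup V] [NormedSpace ℝ V]
    (h : ¬ FiniteDimensional ℝ V) : ¬ FiniteDimensional ℝ (Dual ℝ V) := by
  intro hd
  exact h (FiniteDimensional.of_injective (inclusionInDoubleDualLi ℝ (E := V)).toLinearMap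
    (inclusionInDoubleDualLi ℝ (E := V)).injective)

/-- An infinite-dimensional space admits a linearly independent sequence. -/
theorem NormingAux.exists_indep {V : Type*} [AddCommGroup V] [Module ℝ V]
    (h : ¬ FiniteDimensional ℝ V) : ∃ g : ℕ → V, LinearIndependent ℝ g := by
  have b := Module.Basis.ofVectorSpace ℝ V
  haveI : Infinite (Module.Basis.ofVectorSpaceIndex ℝ V) := by
    rw [← not_finite_iff_infinite]
    intro hfin
    exact h (Module.Finite.of_basis b)
  let e := Infinite.natEmbedding (Module.Basis.ofVectorSpaceIndex ℝ V)
  exact ⟨b ∘ e, b.linearIndependent.comp e e.injective⟩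

/-- If `Q` is a metric surjection then precomposition with `Q` does not decrease norms. -/
theorem NormingAux.opNorm_le_comp {V E : Type*} [SeminormedAddCommGroup V] [NormedSpace ℝ V]
    [SeminormedAddCommGroup E] [NormedSpace ℝ E] (Q : V →L[ℝ] E)
    (hQsurj : ∀ x : E, ∀ ε : ℝ, 0 < ε → ∃ f, Q f = x ∧ ‖f‖ ≤ ‖x‖ + ε)
    (g : Dual ℝ E) : ‖g‖ ≤ ‖g.comp Q‖ := by
  set A : ℝ := ‖g.comp Q‖ with hA
  have hA0 : 0 ≤ A := norm_nonneg _
  refine ContinuousLinearMap.opNorm_le_bound _ hA0 fun x => ?_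
  refine le_of_forall_pos_le_add fun ε hε => ?_
  have hA1 : (0:ℝ) < A + 1 := by linarith
  obtain ⟨f, hQf, hfle⟩ := hQsurj x (ε / (A + 1)) (by positivity)
  have h1 : ‖g x‖ ≤ A * ‖f‖ := by
    rw [← hQf]
    exact (g.comp Q).le_opNorm f
  have h2 : A * ‖f‖ ≤ A * (‖x‖ + ε / (A + 1)) :=
    mul_le_mul_of_nonneg_left hfle hA0
  have h3 : A * (ε / (A + 1)) ≤ ε := by
    rw [mul_div_assoc'] at *
    rw [div_le_iff₀ hA1]
    nlinarith
  nlinarith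

/-- Lower bound for the quotient norm. -/
theorem NormingAux.mk_lower {W : Type*} [SeminormedAddCommGroup W] [NormedSpace ℝ W]
    (R : Submodule ℝ W) (φ : W) (c₁ : ℝ)
    (hk : ∀ ψ ∈ R, c₁ * ‖φ‖ ≤ ‖φ - ψ‖) :
    c₁ * ‖φ‖ ≤ ‖(Submodule.Quotient.mk φ : W ⧸ R)‖ := by
  by_contra hlt
  push_neg at hlt
  obtain ⟨m, hm, hmlt⟩ := Submodule.Quotient.norm_mk_lt
    (Submodule.Quotient.mk φ : W ⧸ R) (sub_pos.mpr hlt)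
  have hmem : m - φ ∈ R := (Submodule.Quotient.eq R).mp hm
  have h1 : c₁ * ‖φ‖ ≤ ‖m‖ := by
    have := hk (-(m - φ)) (neg_mem hmem)
    simpa using this
  linarith

/-- The key annihilator estimate from the norming condition. -/
theorem NormingAux.ann_bound {Z : Type*} [NormedAddCommGroup Z] [NormedSpace ℝ Z]
    (M : Submodule ℝ (Dual ℝ Z)) {c : ℝ} (hc : 0 < c)
    (hnc : ∀ z : Z, c * ‖z‖ ≤ sSup {r : ℝ | ∃ f ∈ M, f ≠ 0 ∧ r = |f z| / ‖f‖})
    (φ : Dual ℝ (Dual ℝ Z)) (hφM : ∀ f ∈ M, φ f = 0) (z : Z) :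
    (c / (1 + c)) * ‖φ‖ ≤ ‖φ - inclusionInDoubleDual ℝ Z z‖ := by
  have hsup : c * ‖z‖ ≤ ‖φ - inclusionInDoubleDual ℝ Z z‖ := by
    refine le_trans (hnc z) (Real.sSup_le ?_ (norm_nonneg _))
    rintro r ⟨f, hfM, hf0, rfl⟩
    rw [div_le_iff₀ (norm_pos_iff.mpr hf0)]
    have habs : |f z| = ‖(φ - inclusionInDoubleDual ℝ Z z) f‖ := by
      simp [ContinuousLinearMap.sub_apply, hφM f hfM, dual_def, Real.norm_eq_abs, abs_neg]
    rw [habs]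
    exact (φ - inclusionInDoubleDual ℝ Z z).le_opNorm f
  have hn : ‖φ‖ ≤ ‖φ - inclusionInDoubleDual ℝ Z z‖ + ‖z‖ := by
    calc ‖φ‖ = ‖(φ - inclusionInDoubleDual ℝ Z z) + inclusionInDoubleDual ℝ Z z‖ := by
          rw [sub_add_cancel]
      _ ≤ ‖φ - inclusionInDoubleDual ℝ Z z‖ + ‖inclusionInDoubleDual ℝ Z z‖ := norm_add_le _ _
      _ ≤ ‖φ - inclusionInDoubleDual ℝ Z z‖ + ‖z‖ := by
          have := double_dual_bound ℝ Z z
          linarith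
  rw [div_mul_eq_mul_div, div_le_iff₀ (by linarith : (0:ℝ) < 1 + c)]
  nlinarith [mul_le_mul_of_nonneg_left hn hc.le]

variable (W : Type*) [NormedAddCommGroup W] [NormedSpace ℝ W] [CompleteSpace W] [Small.{0} W]

/-- The shrink of a small normed space, as a linear isometry equivalence. -/
noncomputable def NormingAux.shrinkIso : Shrink.{0} W ≃ₗᵢ[ℝ] W :=
  ⟨(Shrink.linearEquiv ℝ W), fun _ => rfl⟩

noncomputable instance : CompleteSpace (Shrink.{0} W) :=
  (NormingAux.shrinkIso W).toIsometryEquiv.completeSpace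

end AuxNorming

open NormingAux in
/-- The reduction to a continuous linear surjection onto a Banach space with
infinite-dimensional dual (generic in the ambient space). -/
theorem NormingAux.reduce {X : Type*} [NormedAddCommGroup X] [NormedSpace ℝ X] [CompleteSpace X]
    (M : Submodule ℝ X) [hMc : IsClosed (M : Set X)] (hfin : ¬ FiniteDimensional ℝ (X ⧸ M))
    (P : Prop)
    (k : ∀ (E : Type) [NormedAddCommGroup E] [NormedSpace ℝ E] [CompleteSpace E] (Q : X →L[ℝ] E),
      ¬ FiniteDimensional ℝ (Dual ℝ E) → (∀ f ∈ M, Q f = 0) →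
      (∀ x : E, ∀ ε : ℝ, 0 < ε → ∃ f, Q f = x ∧ ‖f‖ ≤ ‖x‖ + ε) → P) : P := by
  -- the quotient `F := Z* ⧸ M` is an infinite-dimensional Banach space
  have hFdual : ¬ FiniteDimensional ℝ (Dual ℝ (X ⧸ M)) := dual_infinite (V := X ⧸ M) hfin
  obtain ⟨g, hg⟩ := exists_indep hFdual
  set N : Submodule ℝ (X ⧸ M) := ⨅ n, LinearMap.ker (g n : X ⧸ M →ₗ[ℝ] ℝ) with hN
  haveI hNclosed : IsClosed (N : Set (X ⧸ M)) := by
    have : (N : Set (X ⧸ M)) = ⋂ n, (LinearMap.ker (g n : X ⧸ M →ₗ[ℝ] ℝ) : Set (X ⧸ M)) := by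
      simp [hN, Submodule.coe_iInf]
    rw [this]
    exact isClosed_iInter fun n => ContinuousLinearMap.isClosed_ker (g n)
  haveI hsmall : Small.{0} ((X ⧸ M) ⧸ N) := by
    have hle : N ≤ LinearMap.ker (LinearMap.pi (fun n => ((g n) : (X ⧸ M) →ₗ[ℝ] ℝ))) := by
      intro x hx
      simp only [LinearMap.mem_ker, LinearMap.pi_apply]
      funext n
      exact (Submodule.mem_iInf _).mp hx n
    have hinj : Function.Injective (N.liftQ _ hle) := by
      rw [← LinearMap.ker_eq_bot, Submodule.ker_liftQ_eq_bot]
      intro x hx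
      simp only [LinearMap.mem_ker, LinearMap.pi_apply] at hx
      exact (Submodule.mem_iInf _).mpr fun n => congrFun hx n
    exact small_of_injective hinj
  set E := Shrink.{0} ((X ⧸ M) ⧸ N) with hE
  set e : E ≃ₗᵢ[ℝ] ((X ⧸ M) ⧸ N) := shrinkIso _ with he
  -- the dual of `E` is infinite dimensional
  have hquotdual : ¬ FiniteDimensional ℝ (Dual ℝ ((X ⧸ M) ⧸ N)) := by
    intro hfd
    have hind : LinearIndependent ℝ
        (fun n => liftCLM N (g n) (iInf_le (fun n => LinearMap.ker (g n : X ⧸ M →ₗ[ℝ] ℝ)) n)) := by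
      apply LinearIndependent.of_comp (precompLM (mkCLM N))
      have hcomp : (⇑(precompLM (mkCLM N)) ∘
          fun n => liftCLM N (g n) (iInf_le (fun n => LinearMap.ker (g n : X ⧸ M →ₗ[ℝ] ℝ)) n)) = g := by
        funext n
        ext f
        rfl
      rw [hcomp]
      exact hg
    exact (instInfiniteNat).not_finite hind.finite
  have hEdual_not : ¬ FiniteDimensional ℝ (Dual ℝ E) := by
    intro hfd
    apply hquotdual
    exact FiniteDimensional.of_injective
      (precompLM (e.toLinearIsometry.toContinuousLinearMap))
      (precompLM_injective e.surjective)
  -- the continuous linear surjection `Q : Z* → E`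
  set Q : X →L[ℝ] E :=
    (e.symm.toLinearIsometry.toContinuousLinearMap).comp ((mkCLM N).comp (mkCLM M)) with hQ
  have hQ0 : ∀ f ∈ M, Q f = 0 := by
    intro f hf
    show e.symm.toLinearIsometry.toContinuousLinearMap ((mkCLM N) ((mkCLM M) f)) = 0
    have h1 : (mkCLM M) f = 0 := by
      rw [NormingAux.mkCLM_apply]
      exact (Submodule.Quotient.mk_eq_zero M).mpr hf
    rw [h1, map_zero, map_zero]
  have hQsurj : ∀ x : E, ∀ ε : ℝ, 0 < ε → ∃ f, Q f = x ∧ ‖f‖ ≤ ‖x‖ + ε := by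
    intro x ε hε
    obtain ⟨w, hw, hwn⟩ := Submodule.Quotient.norm_mk_lt (e x) (half_pos hε)
    obtain ⟨f, hf, hfn⟩ := Submodule.Quotient.norm_mk_lt w (half_pos hε)
    refine ⟨f, ?_, ?_⟩
    · show e.symm.toLinearIsometry.toContinuousLinearMap ((mkCLM N) ((mkCLM M) f)) = x
      have h1 : (mkCLM M) f = w := hf
      have h2 : (mkCLM N) w = e x := hw
      rw [h1, h2]
      exact e.symm_apply_apply x
    · have hex : ‖e x‖ = ‖x‖ := e.norm_map x
      rw [hex] at hwn
      linarith
  exact k E Q hEdual_not hQ0 hQsurj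

set_option maxHeartbeats 2000000 in
open NormingAux in
/-- Let `Z` be a Banach space such that `Z**/Z` contains no
infinite-dimensional subspace isomorphic to a dual Banach space. Then every closed
norming subspace of `Z*` has finite codimension. -/
theorem norming_subspace_finite_codim_of_no_dual_in_bidual_quotient
    {Z : Type*} [NormedAddCommGroup Z] [NormedSpace ℝ Z] [CompleteSpace Z]
    -- `Z**/Z` contains no infinite-dimensional subspace isomorphic to a dual space:
    (h : ∀ (E : Type) [NormedAddCommGroup E] [NormedSpace ℝ E] [CompleteSpace E],
      ¬ FiniteDimensional ℝ (NormedSpace.Dual ℝ E) →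
      ¬ ∃ T : NormedSpace.Dual ℝ E →L[ℝ]
          (NormedSpace.Dual ℝ (NormedSpace.Dual ℝ Z) ⧸
            LinearMap.range ((NormedSpace.inclusionInDoubleDual ℝ Z) :
              Z →ₗ[ℝ] NormedSpace.Dual ℝ (NormedSpace.Dual ℝ Z))),
        ∃ c : ℝ, 0 < c ∧ ∀ f : NormedSpace.Dual ℝ E, c * ‖f‖ ≤ ‖T f‖) :
    ∀ M : Submodule ℝ (NormedSpace.Dual ℝ Z),
      IsClosed (M : Set (NormedSpace.Dual ℝ Z)) →
      (∃ c : ℝ, 0 < c ∧ ∀ z : Z,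
        c * ‖z‖ ≤ sSup {r : ℝ | ∃ f ∈ M, f ≠ 0 ∧ r = |f z| / ‖f‖}) →
      FiniteDimensional ℝ (NormedSpace.Dual ℝ Z ⧸ M) := by
  intro M hMclosed hnorm
  obtain ⟨c, hc, hnc⟩ := hnorm
  by_contra hfin
  haveI hMc : IsClosed (M : Set (Dual ℝ Z)) := hMclosed
  refine NormingAux.reduce M hfin False (fun E _ _ _ Q hEdual_not hQ0 hQsurj => ?_)
  refine h E hEdual_not
    ⟨(mkCLM _).comp (precompCLM Q), c / (1 + c), div_pos hc (by linarith), ?_⟩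
  intro gφ
  have hgle : ‖gφ‖ ≤ ‖gφ.comp Q‖ := opNorm_le_comp Q hQsurj gφ
  have hφM : ∀ f ∈ M, (gφ.comp Q) f = 0 := by
    intro f hf
    show gφ (Q f) = 0
    rw [hQ0 f hf, map_zero]
  have hk : ∀ ψ ∈ LinearMap.range ((NormedSpace.inclusionInDoubleDual ℝ Z) :
      Z →ₗ[ℝ] NormedSpace.Dual ℝ (NormedSpace.Dual ℝ Z)),
      (c / (1 + c)) * ‖gφ.comp Q‖ ≤ ‖gφ.comp Q - ψ‖ := by
    rintro ψ ⟨z, rfl⟩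
    exact ann_bound M hc hnc _ hφM z
  have hmk := mk_lower _ (gφ.comp Q) _ hk
  have hTφ : ((mkCLM _).comp (precompCLM Q)) gφ
      = (Submodule.Quotient.mk (gφ.comp Q) :
        NormedSpace.Dual ℝ (NormedSpace.Dual ℝ Z) ⧸
          LinearMap.range ((NormedSpace.inclusionInDoubleDual ℝ Z) :
            Z →ₗ[ℝ] NormedSpace.Dual ℝ (NormedSpace.Dual ℝ Z))) := rfl
  rw [hTφ]
  calc (c / (1 + c)) * ‖gφ‖ ≤ (c / (1 + c)) * ‖gφ.comp Q‖ :=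
        mul_le_mul_of_nonneg_left hgle (div_pos hc (by linarith)).le
    _ ≤ _ := hmk
end

section
/- Let X be a Banach space with a boundedly complete basis (e_i) with biorthogonal functionals (e_i*), and let M = cl(span(e_i*)) ⊆ X*. Then M contains no proper closed total subspace, i.e., if N ⊆ M is closed and total over X (N separates the points of X), then N = M. -/
/-!
Separate a vector `g ∈ M \ N` from the closed subspace `N` by some `Φ ∈ X**` vanishing on `N`.
The partial sums `x_n` of `∑ Φ(e_i*) e_i` are bounded by `‖Φ‖ · sup_n ‖P_n‖`, where `P_n` are the
basis projections: for a norming functional `h` of `x_n` one has `‖x_n‖ = h x_n = Φ (h ∘ P_n)`.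
So bounded completeness yields `y ∈ X` with `e_i*(y) = Φ(e_i*)`; hence `Φ` agrees with
evaluation at `y` on `M`. Then `g y = Φ g ≠ 0`, so `y ≠ 0`, while every `f ∈ N` has
`f y = Φ f = 0`, contradicting totality.
-/

open NormedSpace Filter Finset Topology

theorem Submodule.exists_dual_map_eq_zero_of_notMem {𝕜 E : Type*} [RCLike 𝕜]
    [NormedAddCommGroup E] [NormedSpace 𝕜 E] {N : Submodule 𝕜 E}
    (hN : IsClosed (N : Set E)) {x : E} (hx : x ∉ N) :
    ∃ f : StrongDual 𝕜 E, (∀ a ∈ N, f a = 0) ∧ f x ≠ 0 := by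
  -- the local instance `IsClosed N` makes `E ⧸ N` a normed space
  have := hN
  obtain ⟨φ, -, hφ⟩ := exists_dual_vector'' 𝕜 (N.mkQL x)
  refine ⟨φ.comp N.mkQL, fun a ha => ?_, ?_⟩
  · simp [(Submodule.Quotient.mk_eq_zero N).2 ha]
  · have : N.mkQL x ≠ 0 := by simpa [Submodule.Quotient.mk_eq_zero] using hx
    rw [ContinuousLinearMap.comp_apply, hφ]
    exact_mod_cast norm_ne_zero_iff.2 this

namespace SchauderBasis

section NontriviallyNormedField

variable {𝕜 X : Type*} [NontriviallyNormedField 𝕜] [NormedAddCommGroup X] [NormedSpace 𝕜 X]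

def ofTendsto (e : ℕ → X) (estar : ℕ → StrongDual 𝕜 X)
    (hbiorth : ∀ i j, estar i (e j) = if i = j then (1 : 𝕜) else 0)
    (hbasis : ∀ y : X, Tendsto (fun n => ∑ i ∈ range n, estar i y • e i) atTop (𝓝 y)) :
    SchauderBasis 𝕜 X where
  basis := e
  coord := estar
  ortho i j := by simp [hbiorth, Pi.single_apply]
  expansion y := by
    change Tendsto _ (SummationFilter.conditional ℕ).filter _
    rw [SummationFilter.conditional_filter_eq_map_range, tendsto_map'_iff]
    exact hbasis y

variable (b : SchauderBasis 𝕜 X)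

def IsBoundedlyComplete : Prop :=
  ∀ a : ℕ → 𝕜, (∃ C : ℝ, ∀ n, ‖∑ i ∈ range n, a i • b i‖ ≤ C) →
    ∃ y : X, Tendsto (fun n => ∑ i ∈ range n, a i • b i) atTop (𝓝 y)

theorem coord_sum_range_smul (a : ℕ → 𝕜) {j n : ℕ} (hjn : j < n) :
    b.coord j (∑ i ∈ range n, a i • b i) = a j := by
  simp [map_sum, b.ortho, Pi.single_apply, hjn]

theorem coord_eq_of_tendsto {a : ℕ → 𝕜} {y : X}
    (hy : Tendsto (fun n => ∑ i ∈ range n, a i • b i) atTop (𝓝 y)) (j : ℕ) :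
    b.coord j y = a j := by
  refine tendsto_nhds_unique (((b.coord j).continuous.tendsto y).comp hy)
    (tendsto_const_nhds.congr' ?_)
  filter_upwards [eventually_gt_atTop j] with n hn
  exact (b.coord_sum_range_smul a hn).symm

theorem apply_eq_of_mem_closure_span_coord {Φ : StrongDual 𝕜 (StrongDual 𝕜 X)} {y : X}
    (h : ∀ j, Φ (b.coord j) = b.coord j y) {g : StrongDual 𝕜 X}
    (hg : g ∈ (Submodule.span 𝕜 (Set.range b.coord)).topologicalClosure) :
    Φ g = g y :=
  ContinuousLinearMap.eqOn_closure_span (g := inclusionInDoubleDual 𝕜 X y)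
    (by rintro _ ⟨j, rfl⟩; exact h j) hg

end NontriviallyNormedField

section RCLike

variable {𝕜 X : Type*} [RCLike 𝕜] [NormedAddCommGroup X] [NormedSpace 𝕜 X]
  (b : SchauderBasis 𝕜 X)

theorem norm_sum_range_bidual_smul_le {C : ℝ} (hC : ∀ n, ‖b.proj n‖ ≤ C)
    (Φ : StrongDual 𝕜 (StrongDual 𝕜 X)) (n : ℕ) :
    ‖∑ i ∈ range n, Φ (b.coord i) • b i‖ ≤ ‖Φ‖ * C := by
  set x := ∑ i ∈ range n, Φ (b.coord i) • b i
  obtain ⟨h, hh, hhx⟩ := exists_dual_vector'' 𝕜 x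
  have hcomp : h.comp (b.proj n) = ∑ i ∈ range n, h (b i) • b.coord i := by
    ext y
    simp [map_sum, mul_comm]
  have hΦ : Φ (h.comp (b.proj n)) = h x := by
    simp [hcomp, x, map_sum, mul_comm]
  calc ‖x‖ = ‖Φ (h.comp (b.proj n))‖ := by rw [hΦ, hhx, RCLike.norm_ofReal, abs_norm]
    _ ≤ ‖Φ‖ * (‖h‖ * ‖b.proj n‖) := Φ.le_opNorm_of_le (h.opNorm_comp_le _)
    _ ≤ ‖Φ‖ * (1 * C) := by gcongr; exact hC n
    _ = ‖Φ‖ * C := by rw [one_mul]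

theorem exists_apply_eq_of_isBoundedlyComplete [CompleteSpace X] (hb : b.IsBoundedlyComplete)
    (Φ : StrongDual 𝕜 (StrongDual 𝕜 X)) :
    ∃ y : X, ∀ g ∈ (Submodule.span 𝕜 (Set.range b.coord)).topologicalClosure, Φ g = g y := by
  obtain ⟨C, hC⟩ := b.exists_norm_proj_le
  obtain ⟨y, hy⟩ := hb _ ⟨_, b.norm_sum_range_bidual_smul_le hC Φ⟩
  exact ⟨y, fun g =>
    b.apply_eq_of_mem_closure_span_coord fun j => (b.coord_eq_of_tendsto hy j).symm⟩

end RCLike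

end SchauderBasis

/-- If `(e i)` is a boundedly complete basis of a Banach space `X` with
biorthogonal functionals `(estar i)` and `M` is the closed linear span of the
`estar i` in `X*`, then `M` contains no proper closed total subspace: every closed
subspace `N ⊆ M` that separates the points of `X` equals `M`. -/
theorem no_proper_closed_total_subspace_of_boundedly_complete
    {X : Type*} [NormedAddCommGroup X] [NormedSpace ℝ X] [CompleteSpace X]
    (e : ℕ → X) (estar : ℕ → StrongDual ℝ X)
    (hbiorth : ∀ i j, estar i (e j) = if i = j then (1 : ℝ) else 0)
    (hbasis : ∀ y : X,
      Tendsto (fun n => ∑ i ∈ range n, estar i y • e i) atTop (nhds y))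
    (hbc : ∀ a : ℕ → ℝ, (∃ C : ℝ, ∀ n, ‖∑ i ∈ range n, a i • e i‖ ≤ C) →
      ∃ y : X, Tendsto (fun n => ∑ i ∈ range n, a i • e i) atTop (nhds y))
    (N : Submodule ℝ (StrongDual ℝ X))
    (hNM : N ≤ (Submodule.span ℝ (Set.range estar)).topologicalClosure)
    (hNc : IsClosed (N : Set (StrongDual ℝ X)))
    (htotal : ∀ x : X, x ≠ 0 → ∃ f ∈ N, f x ≠ 0) :
    N = (Submodule.span ℝ (Set.range estar)).topologicalClosure := by
  set b := SchauderBasis.ofTendsto e estar hbiorth hbasis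
  refine le_antisymm hNM fun g hg => ?_
  by_contra hgN
  obtain ⟨Φ, hΦN, hΦg⟩ := Submodule.exists_dual_map_eq_zero_of_notMem hNc hgN
  obtain ⟨y, hy⟩ := b.exists_apply_eq_of_isBoundedlyComplete hbc Φ
  have hy0 : y ≠ 0 := by
    rintro rfl
    exact hΦg (by simpa using hy g hg)
  obtain ⟨f, hfN, hfy⟩ := htotal y hy0
  exact hfy (by rw [← hy f (hNM hfN)]; exact hΦN f hfN)
end
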